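/- arXiv:0912.4437 — 5 statements merged into one kernel-verified Lean document; each statement's English description precedes it below -/
import Mathlib

section
/- Let β : [0,∞) → [0,1) be a function such that for every sequence (t_n) of nonnegative reals, β(t_n) → 1 implies t_n → 0. Let (a_n) be a sequence of positive real numbers satisfying a_{n+1} ≤ β(a_n) · a_n for all n. Then the sequence (a_n) is decreasing and converges to 0. -/
/-!
Since `β < 1`, the sequence strictly decreases, hence converges to some `L`. If `L ≠ 0`, the
ratios `a (n + 1) / a n ≤ β (a n) ≤ 1` tend to `L / L = 1`, so `β (a n) → 1`, and the Geraghty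
condition forces `a n → 0`, i.e. `L = 0` after all.
-/

open Filter Topology

theorem strictAnti_of_succ_le_mul_of_lt_one {a c : ℕ → ℝ} (ha : ∀ n, 0 < a n)
    (hc : ∀ n, c n < 1) (h : ∀ n, a (n + 1) ≤ c n * a n) : StrictAnti a :=
  strictAnti_nat_of_succ_lt fun n =>
    calc a (n + 1) ≤ c n * a n := h n
      _ < 1 * a n := mul_lt_mul_of_pos_right (hc n) (ha n)
      _ = a n := one_mul _

theorem tendsto_one_of_succ_le_mul_of_le_one {a c : ℕ → ℝ} {L : ℝ} (ha : ∀ n, 0 < a n)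
    (hc : ∀ n, c n ≤ 1) (h : ∀ n, a (n + 1) ≤ c n * a n)
    (hL : Tendsto a atTop (𝓝 L)) (hL0 : L ≠ 0) : Tendsto c atTop (𝓝 1) := by
  have hratio : Tendsto (fun n => a (n + 1) / a n) atTop (𝓝 1) := by
    have := ((tendsto_add_atTop_iff_nat 1).2 hL).div hL hL0
    rwa [div_self hL0] at this
  refine tendsto_of_tendsto_of_tendsto_of_le_of_le hratio tendsto_const_nhds (fun n => ?_) hc
  exact (div_le_iff₀ (ha n)).2 (h n)

/-- If `β : [0,∞) → [0,1)` satisfies the Geraghty condition and `(aₙ)` is a sequence of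
positive reals with `a_{n+1} ≤ β aₙ * aₙ`, then `(aₙ)` is (strictly) decreasing and
converges to `0`. -/
theorem geraghty_orbit_distances_to_zero
    (β : ℝ → ℝ)
    (hβ_mem : ∀ t, 0 ≤ t → 0 ≤ β t ∧ β t < 1)
    (hβ_S : ∀ t : ℕ → ℝ, (∀ n, 0 ≤ t n) →
      Filter.Tendsto (fun n => β (t n)) Filter.atTop (nhds 1) →
      Filter.Tendsto t Filter.atTop (nhds 0))
    (a : ℕ → ℝ) (ha_pos : ∀ n, 0 < a n)
    (ha_rec : ∀ n, a (n + 1) ≤ β (a n) * a n) :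
    StrictAnti a ∧ Filter.Tendsto a Filter.atTop (nhds 0) := by
  have hβ_lt_one : ∀ n, β (a n) < 1 := fun n => (hβ_mem (a n) (ha_pos n).le).2
  have hanti := strictAnti_of_succ_le_mul_of_lt_one ha_pos hβ_lt_one ha_rec
  refine ⟨hanti, ?_⟩
  obtain ⟨L, hL⟩ : ∃ L, Tendsto a atTop (𝓝 L) :=
    ⟨_, tendsto_atTop_ciInf hanti.antitone ⟨0, by rintro _ ⟨n, rfl⟩; exact (ha_pos n).le⟩⟩
  obtain rfl : L = 0 := by
    by_contra hL0
    have hβ_one := tendsto_one_of_succ_le_mul_of_le_one ha_pos (fun n => (hβ_lt_one n).le)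
      ha_rec hL hL0
    exact hL0 (tendsto_nhds_unique hL (hβ_S a (fun n => (ha_pos n).le) hβ_one))
  exact hL
end

section
/- Let ℓ^∞ be the Banach space of all bounded real sequences with the supremum norm, let (e_n) be its canonical basis, let (τ_n) be the sequence defined by τ_1 = 1/2 and τ_{n+1} = (1 − τ_n) τ_n, and put x_n = τ_n e_n and X_n = {x_n, x_{n+1}, x_{n+2}, ...}. Then for all positive integers m > n, the Hausdorff distance (with respect to the supremum norm metric) between X_{m+1} and X_{n+1} equals τ_{n+1}. -/
/-!
In `ℓ^∞` the points `xⱼ = τⱼ eⱼ` and `xₖ = τₖ eₖ` (`j ≠ k`) are at distance `max τⱼ τₖ`, and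
`τ` decreases. Hence every point of `X_{n+1}` lies within `τ_{n+1}` of `X_{m+1}` (use `x_{m+1}`),
while `x_{n+1}` is at distance exactly `τ_{n+1}` from every point of `X_{m+1}`.
-/

open Set Metric

section Logistic

variable {u : ℕ → ℝ} {a : ℕ}

theorem logistic_mem_Ioo (ha : u a ∈ Ioo 0 1)
    (hrec : ∀ n, a ≤ n → u (n + 1) = (1 - u n) * u n) : ∀ n, a ≤ n → u n ∈ Ioo 0 1 := by
  intro n hn
  induction n, hn using Nat.le_induction with
  | base => exact ha
  | succ k hk ih =>
    obtain ⟨h0, h1⟩ := ih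
    rw [hrec k hk]
    constructor <;> nlinarith

theorem logistic_antitoneOn (ha : u a ∈ Ioo 0 1)
    (hrec : ∀ n, a ≤ n → u (n + 1) = (1 - u n) * u n) : AntitoneOn u (Ici a) :=
  antitoneOn_nat_Ici_of_succ_le fun k hk => by
    obtain ⟨h0, -⟩ := logistic_mem_Ioo ha hrec k hk
    rw [hrec k hk]
    nlinarith

end Logistic

theorem lp.dist_single_top_of_ne {ι : Type*} [DecidableEq ι] {E : ι → Type*}
    [∀ i, NormedAddCommGroup (E i)] {i j : ι} (hij : i ≠ j) (a : E i) (b : E j) :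
    dist (lp.single ⊤ i a) (lp.single ⊤ j b) = max ‖a‖ ‖b‖ := by
  rw [dist_eq_norm]
  set f := lp.single ⊤ i a - lp.single ⊤ j b
  have hf : ∀ k, f k = lp.single ⊤ i a k - lp.single ⊤ j b k := fun k => rfl
  have hfi : f i = a := by rw [hf, lp.single_apply_self, lp.single_apply_ne ⊤ j b hij, sub_zero]
  have hfj : f j = -b := by
    rw [hf, lp.single_apply_self, lp.single_apply_ne ⊤ i a hij.symm, zero_sub]
  refine le_antisymm (lp.norm_le_of_forall_le (le_max_of_le_left (norm_nonneg a)) fun k => ?_)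
    (max_le ?_ ?_)
  · by_cases hki : k = i
    · subst hki; simp [hfi]
    by_cases hkj : k = j
    · subst hkj; simp [hfj]
    rw [hf, lp.single_apply_ne ⊤ i a hki, lp.single_apply_ne ⊤ j b hkj, sub_zero]
    simp
  · simpa [hfi] using lp.norm_apply_le_norm ENNReal.top_ne_zero f i
  · simpa [hfj] using lp.norm_apply_le_norm ENNReal.top_ne_zero f j

section TailHausdorff

variable {α : Type*} [PseudoMetricSpace α] {x : ℕ → α} {r : ℕ → ℝ} {n : ℕ}

theorem image_Ici_subset_closedBall (hr : AntitoneOn r (Ici n))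
    (hdist : ∀ j ∈ Ici n, ∀ k ∈ Ici n, j ≠ k → dist (x j) (x k) = max (r j) (r k)) :
    x '' Ici n ⊆ closedBall (x n) (r n) := by
  rintro _ ⟨k, hk, rfl⟩
  rw [mem_closedBall]
  rcases eq_or_ne k n with rfl | hkn
  · -- `r k ≥ 0` because it is the distance from `x k` to `x (k + 1)`.
    rw [dist_self, ← max_eq_left (hr self_mem_Ici (Nat.le_succ k) (Nat.le_succ k))]
    rw [← hdist k self_mem_Ici (k + 1) (Nat.le_succ k) (Nat.succ_ne_self k).symm]
    exact dist_nonneg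
  · rw [hdist k hk n self_mem_Ici hkn]
    exact max_le (hr self_mem_Ici hk hk) le_rfl

theorem hausdorffDist_image_Ici_of_dist_eq_max (hr : AntitoneOn r (Ici n))
    (hdist : ∀ j ∈ Ici n, ∀ k ∈ Ici n, j ≠ k → dist (x j) (x k) = max (r j) (r k))
    {m : ℕ} (hnm : n < m) : hausdorffDist (x '' Ici m) (x '' Ici n) = r n := by
  have hrm : r m ≤ r n := hr self_mem_Ici hnm.le hnm.le
  have hdist_nm : dist (x n) (x m) = r n := by
    rw [hdist n self_mem_Ici m hnm.le hnm.ne, max_eq_left hrm]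
  have hr0 : 0 ≤ r n := hdist_nm ▸ dist_nonneg
  have hsub : x '' Ici m ⊆ x '' Ici n := image_mono (Ici_subset_Ici.2 hnm.le)
  apply le_antisymm
  · refine hausdorffDist_le_of_mem_dist hr0 (fun y hy => ⟨y, hsub hy, by simpa using hr0⟩) ?_
    rintro _ ⟨k, hk, rfl⟩
    rcases le_or_gt m k with hmk | hkm
    · exact ⟨x k, mem_image_of_mem x hmk, by simpa using hr0⟩
    · refine ⟨x m, mem_image_of_mem x self_mem_Ici, ?_⟩
      rw [hdist k hk m hnm.le hkm.ne]
      exact max_le (hr self_mem_Ici hk hk) hrm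
  · have hfin : hausdorffEDist (x '' Ici n) (x '' Ici m) ≠ ⊤ :=
      hausdorffEDist_ne_top_of_nonempty_of_bounded (nonempty_Ici.image x) (nonempty_Ici.image x)
        (isBounded_closedBall.subset (image_Ici_subset_closedBall hr hdist))
        (isBounded_closedBall.subset (hsub.trans (image_Ici_subset_closedBall hr hdist)))
    calc r n ≤ infDist (x n) (x '' Ici m) := by
          refine (le_infDist (nonempty_Ici.image x)).2 ?_
          rintro _ ⟨k, hk, rfl⟩
          rw [mem_Ici] at hk
          rw [hdist n self_mem_Ici k (hnm.le.trans hk) (hnm.trans_le hk).ne]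
          exact le_max_left _ _
      _ ≤ hausdorffDist (x '' Ici n) (x '' Ici m) :=
          infDist_le_hausdorffDist_of_mem (mem_image_of_mem x self_mem_Ici) hfin
      _ = hausdorffDist (x '' Ici m) (x '' Ici n) := hausdorffDist_comm

end TailHausdorff

/-- With `τ₁ = 1/2`, `τ_{n+1} = (1 - τₙ) τₙ`, `eₙ` the canonical basis of `ℓ^∞`,
`xₙ = τₙ eₙ` and `Xₙ = {x_k : k ≥ n}`, the Hausdorff distance between `X_{m+1}` and
`X_{n+1}` equals `τ_{n+1}` for all `m > n ≥ 1`. -/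
theorem hausdorffDist_Xm_Xn_eq_tau
    (τ : ℕ → ℝ) (hτ1 : τ 1 = 1 / 2)
    (hτ_rec : ∀ n, 1 ≤ n → τ (n + 1) = (1 - τ n) * τ n)
    (e : ℕ → lp (fun _ : ℕ => ℝ) ⊤) (he : ∀ n, e n = lp.single ⊤ n (1 : ℝ))
    (x : ℕ → lp (fun _ : ℕ => ℝ) ⊤) (hx : ∀ n, x n = τ n • e n)
    (XS : ℕ → Set (lp (fun _ : ℕ => ℝ) ⊤)) (hXS : ∀ n, XS n = {y | ∃ k, n ≤ k ∧ y = x k}) :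
    ∀ m n, 1 ≤ n → n < m →
      Metric.hausdorffDist (XS (m + 1)) (XS (n + 1)) = τ (n + 1) := by
  intro m n _ hnm
  have hτ1_mem : τ 1 ∈ Ioo 0 1 := by rw [hτ1]; norm_num
  have hx_single : ∀ k, x k = lp.single ⊤ k (τ k) := fun k => by
    rw [hx, he, ← lp.single_smul, smul_eq_mul, mul_one]
  have hXS_image : ∀ N, XS N = x '' Ici N := fun N => by
    ext y
    simp only [hXS, mem_ofPred_eq, mem_image, mem_Ici, eq_comm (a := y)]
  have hdist : ∀ j ∈ Ici (n + 1), ∀ k ∈ Ici (n + 1), j ≠ k →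
      dist (x j) (x k) = max (τ j) (τ k) := fun j hj k hk hjk => by
    have hτ_pos : ∀ i ∈ Ici (n + 1), 0 ≤ τ i := fun i hi =>
      (logistic_mem_Ioo hτ1_mem hτ_rec i ((Nat.le_add_left 1 n).trans hi)).1.le
    rw [hx_single, hx_single, lp.dist_single_top_of_ne hjk, Real.norm_of_nonneg (hτ_pos j hj),
      Real.norm_of_nonneg (hτ_pos k hk)]
  rw [hXS_image, hXS_image]
  exact hausdorffDist_image_Ici_of_dist_eq_max
    ((logistic_antitoneOn hτ1_mem hτ_rec).mono (Ici_subset_Ici.2 (Nat.le_add_left 1 n))) hdist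
    (Nat.succ_lt_succ hnm)
end

section
/- Let (τ_n) be the sequence defined by τ_1 = 1/2 and τ_{n+1} = (1 − τ_n) τ_n, let x_n = τ_n e_n in ℓ^∞, let X_n = {x_k : k ≥ n}, let X = X_1, and define T : X → CB(X) by T x_n = X_{n+1}. Define α : [0,∞) → [0,1) by α(t) = 1 − τ_n if t = τ_n for some positive integer n, and α(t) = 0 otherwise. Then for all x, y ∈ X, H(Tx, Ty) ≤ α(d(x,y)) · d(x,y), where d is the supremum-norm metric and H the induced Hausdorff metric; in particular, for all m > n one has H(T x_m, T x_n) = τ_{n+1} = α(d(x_m, x_n)) · d(x_m, x_n). -/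
/-!
The points `x_k = τ_k e_k` lie on distinct coordinate axes of `ℓ^∞`, so
`d(x_i, x_j) = max(τ_i, τ_j) = τ_i` for `i < j`, the sequence `τ` being decreasing. Hence every
point of a tail `X_{n+1}` is within `τ_{n+1}` of the later tail `X_{m+1}` (through `x_{m+1}`),
while `x_{n+1}` is at distance exactly `τ_{n+1}` from all of `X_{m+1}`; this pins the Hausdorff
distance at `τ_{n+1}`, which the recursion rewrites as `(1 - τ_n) τ_n = α(τ_n) τ_n`.
-/

open Metric Set

theorem lp.norm_single_sub_single_top {ι : Type*} {E : ι → Type*}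
    [∀ i, NormedAddCommGroup (E i)] [DecidableEq ι] {i j : ι} (hij : i ≠ j) (a : E i) (b : E j) :
    ‖lp.single ⊤ i a - lp.single ⊤ j b‖ = max ‖a‖ ‖b‖ := by
  have hmax : 0 ≤ max ‖a‖ ‖b‖ := (norm_nonneg a).trans (le_max_left _ _)
  refine le_antisymm (lp.norm_le_of_forall_le hmax fun k => ?_) (max_le ?_ ?_)
  · rcases eq_or_ne k i with rfl | hki
    · simp [hij]
    rcases eq_or_ne k j with rfl | hkj
    · simp [hki]
    · simp [hki, hkj, hmax]
  · simpa [hij] using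
      lp.norm_apply_le_norm ENNReal.top_ne_zero (lp.single ⊤ i a - lp.single ⊤ j b) i
  · simpa [hij.symm] using
      lp.norm_apply_le_norm ENNReal.top_ne_zero (lp.single ⊤ i a - lp.single ⊤ j b) j

theorem lp.dist_single_single_top {ι : Type*} {E : ι → Type*}
    [∀ i, NormedAddCommGroup (E i)] [DecidableEq ι] {i j : ι} (hij : i ≠ j) (a : E i) (b : E j) :
    dist (lp.single ⊤ i a) (lp.single ⊤ j b) = max ‖a‖ ‖b‖ := by
  rw [dist_eq_norm, lp.norm_single_sub_single_top hij]

section LogisticSequence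

variable {τ : ℕ → ℝ}

theorem mem_Ioo_of_logistic_rec (hτ1 : τ 1 ∈ Ioo 0 1)
    (hτ_rec : ∀ n, 1 ≤ n → τ (n + 1) = (1 - τ n) * τ n) {n : ℕ} (hn : 1 ≤ n) : τ n ∈ Ioo 0 1 := by
  induction n, hn using Nat.le_induction with
  | base => exact hτ1
  | succ k hk ih =>
    obtain ⟨h0, h1⟩ := ih
    rw [hτ_rec k hk]
    constructor <;> nlinarith

theorem antitoneOn_of_logistic_rec (hτ1 : τ 1 ∈ Ioo 0 1)
    (hτ_rec : ∀ n, 1 ≤ n → τ (n + 1) = (1 - τ n) * τ n) : AntitoneOn τ (Ici 1) :=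
  antitoneOn_nat_Ici_of_succ_le fun n hn => by
    rw [hτ_rec n hn]
    nlinarith [(mem_Ioo_of_logistic_rec hτ1 hτ_rec hn).1]

end LogisticSequence

section Tails

variable {E : Type*} [PseudoMetricSpace E] {p : ℕ → E} {τ : ℕ → ℝ} {n : ℕ}

theorem isBounded_image_Ici_of_dist_eq (hdist : ∀ i j, n ≤ i → i < j → dist (p i) (p j) = τ i) :
    Bornology.IsBounded (p '' Ici n) := by
  refine (isBounded_closedBall (x := p n) (r := τ n)).subset ?_
  rintro _ ⟨k, hk, rfl⟩
  rcases (mem_Ici.mp hk).eq_or_lt with rfl | hnk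
  · simpa using dist_nonneg.trans_eq (hdist n (n + 1) le_rfl n.lt_succ_self)
  · rw [mem_closedBall, dist_comm, hdist n k le_rfl hnk]

theorem hausdorffDist_image_Ici_of_dist_eq {m : ℕ} (hnm : n < m)
    (hdist : ∀ i j, n ≤ i → i < j → dist (p i) (p j) = τ i) (hτ : AntitoneOn τ (Ici n)) :
    hausdorffDist (p '' Ici m) (p '' Ici n) = τ n := by
  have hτn : 0 ≤ τ n := dist_nonneg.trans_eq (hdist n m le_rfl hnm)
  have hsub : p '' Ici m ⊆ p '' Ici n := image_mono (Ici_subset_Ici.mpr hnm.le)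
  apply le_antisymm
  · refine hausdorffDist_le_of_mem_dist hτn (fun y hy => ⟨y, hsub hy, by simpa using hτn⟩) ?_
    rintro _ ⟨k, hk, rfl⟩
    rcases lt_or_ge k m with hkm | hmk
    · exact ⟨p m, mem_image_of_mem p self_mem_Ici,
        (hdist k m hk hkm).trans_le (hτ self_mem_Ici hk hk)⟩
    · exact ⟨p k, mem_image_of_mem p hmk, by simpa using hτn⟩
  · have hfar : τ n ≤ infDist (p n) (p '' Ici m) :=
      (le_infDist (nonempty_Ici.image p)).mpr <| by
        rintro _ ⟨k, hk, rfl⟩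
        exact (hdist n k le_rfl (hnm.trans_le hk)).ge
    rw [hausdorffDist_comm]
    refine hfar.trans (infDist_le_hausdorffDist_of_mem (mem_image_of_mem p self_mem_Ici) ?_)
    exact hausdorffEDist_ne_top_of_nonempty_of_bounded (nonempty_Ici.image p)
      (nonempty_Ici.image p) (isBounded_image_Ici_of_dist_eq hdist)
      ((isBounded_image_Ici_of_dist_eq hdist).subset hsub)

end Tails

theorem example_satisfies_geraghty_contraction_general
    (τ : ℕ → ℝ) (hτ1 : τ 1 = 1 / 2)
    (hτ_rec : ∀ n, 1 ≤ n → τ (n + 1) = (1 - τ n) * τ n)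
    (e : ℕ → lp (fun _ : ℕ => ℝ) ⊤) (he : ∀ n, e n = lp.single ⊤ n (1 : ℝ))
    (x : ℕ → lp (fun _ : ℕ => ℝ) ⊤) (hx : ∀ n, x n = τ n • e n)
    (XS : ℕ → Set (lp (fun _ : ℕ => ℝ) ⊤)) (hXS : ∀ n, XS n = {y | ∃ k, n ≤ k ∧ y = x k})
    (α : ℝ → ℝ)
    (hα_tau : ∀ n, 1 ≤ n → α (τ n) = 1 - τ n) :
    (∀ m n, 1 ≤ m → 1 ≤ n →
      Metric.hausdorffDist (XS (m + 1)) (XS (n + 1)) ≤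
        α (dist (x m) (x n)) * dist (x m) (x n)) ∧
    (∀ m n, 1 ≤ n → n < m →
      Metric.hausdorffDist (XS (m + 1)) (XS (n + 1)) = τ (n + 1) ∧
        τ (n + 1) = α (dist (x m) (x n)) * dist (x m) (x n)) := by
  have hτ_Ioo : τ 1 ∈ Ioo 0 1 := by rw [hτ1]; norm_num
  have hτ_pos k (hk : 1 ≤ k) : 0 < τ k := (mem_Ioo_of_logistic_rec hτ_Ioo hτ_rec hk).1
  have hτ_anti := antitoneOn_of_logistic_rec hτ_Ioo hτ_rec
  have hx_single k : x k = lp.single ⊤ k (τ k) := by simp [hx, he, ← lp.single_smul]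
  have hdist i j (hi : 1 ≤ i) (hij : i < j) : dist (x i) (x j) = τ i := by
    rw [hx_single, hx_single, lp.dist_single_single_top hij.ne, Real.norm_eq_abs, Real.norm_eq_abs,
      abs_of_pos (hτ_pos i hi), abs_of_pos (hτ_pos j (by omega))]
    exact max_eq_left (hτ_anti hi (hi.trans hij.le) hij.le)
  have hXS_image k : XS k = x '' Ici k := by ext; simp [hXS, eq_comm]
  have hH m n (hn : 1 ≤ n) (hnm : n < m) :
      hausdorffDist (XS (m + 1)) (XS (n + 1)) = τ (n + 1) := by
    rw [hXS_image, hXS_image]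
    exact hausdorffDist_image_Ici_of_dist_eq (by omega) (fun i j hi hij => hdist i j (by omega) hij)
      (hτ_anti.mono (Ici_subset_Ici.mpr (by omega)))
  have hα m n (hn : 1 ≤ n) (hnm : n < m) :
      τ (n + 1) = α (dist (x m) (x n)) * dist (x m) (x n) := by
    rw [dist_comm, hdist n m hn hnm, hα_tau n hn, hτ_rec n hn]
  refine ⟨fun m n hm hn => ?_, fun m n hn hnm => ⟨hH m n hn hnm, hα m n hn hnm⟩⟩
  rcases lt_trichotomy n m with h | rfl | h
  · rw [hH m n hn h, hα m n hn h]
  · simp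
  · rw [hausdorffDist_comm, dist_comm, hH n m hm h, hα n m hm h]

/-- With `τ₁ = 1/2`, `τ_{n+1} = (1 - τₙ) τₙ`, `xₙ = τₙ eₙ` in `ℓ^∞`,
`Xₙ = {x_k : k ≥ n}`, `T xₙ = X_{n+1}` and `α(t) = 1 - τₙ` if `t = τₙ` (for some `n ≥ 1`)
and `α(t) = 0` otherwise, the mapping `T` satisfies the Geraghty-type contraction
`H(Tx, Ty) ≤ α(d(x,y)) · d(x,y)` for all `x, y ∈ X = X₁`; in particular, for `m > n ≥ 1`,
`H(T xₘ, T xₙ) = τ_{n+1} = α(d(xₘ,xₙ)) · d(xₘ,xₙ)`. -/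
theorem example_satisfies_geraghty_contraction
    (τ : ℕ → ℝ) (hτ1 : τ 1 = 1 / 2)
    (hτ_rec : ∀ n, 1 ≤ n → τ (n + 1) = (1 - τ n) * τ n)
    (e : ℕ → lp (fun _ : ℕ => ℝ) ⊤) (he : ∀ n, e n = lp.single ⊤ n (1 : ℝ))
    (x : ℕ → lp (fun _ : ℕ => ℝ) ⊤) (hx : ∀ n, x n = τ n • e n)
    (XS : ℕ → Set (lp (fun _ : ℕ => ℝ) ⊤)) (hXS : ∀ n, XS n = {y | ∃ k, n ≤ k ∧ y = x k})
    (α : ℝ → ℝ)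
    (hα_tau : ∀ n, 1 ≤ n → α (τ n) = 1 - τ n)
    (hα_other : ∀ t : ℝ, (∀ n, 1 ≤ n → t ≠ τ n) → α t = 0) :
    (∀ m n, 1 ≤ m → 1 ≤ n →
      Metric.hausdorffDist (XS (m + 1)) (XS (n + 1)) ≤
        α (dist (x m) (x n)) * dist (x m) (x n)) ∧
    (∀ m n, 1 ≤ n → n < m →
      Metric.hausdorffDist (XS (m + 1)) (XS (n + 1)) = τ (n + 1) ∧
        τ (n + 1) = α (dist (x m) (x n)) * dist (x m) (x n)) :=
  example_satisfies_geraghty_contraction_general τ hτ1 hτ_rec e he x hx XS hXS α hα_tau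
end

section
/- Let (τ_n) be the sequence defined by τ_1 = 1/2 and τ_{n+1} = (1 − τ_n) τ_n, let x_n = τ_n e_n in ℓ^∞, let X_n = {x_k : k ≥ n}, and define T by T x_n = X_{n+1}. Then for every positive integer k there is no constant r ∈ [0,1) such that H(T x_m, T x_n) ≤ r · d(x_m, x_n) for all m > n ≥ k; equivalently, for every r ∈ [0,1) and every k there exists n ≥ k with τ_n (1 − τ_n) > r τ_n. -/
/-!
By induction `0 < τₙ ≤ 1/(n+1)`, so `τₙ → 0` and `τₙ (1 - τₙ) > r τₙ` as soon as `τₙ < 1 - r`.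
In `ℓ^∞` the points `a eᵢ` and `b eⱼ` (`i ≠ j`) are at distance `max |a| |b|`. Hence
`d(xₙ₊₁, xₙ) = τₙ`, while `xₙ₊₁ ∈ Xₙ₊₁` is at distance at least `τₙ₊₁` from all of `Xₙ₊₂`,
so `H(Xₙ₊₂, Xₙ₊₁) ≥ τₙ₊₁ = (1 - τₙ) τₙ > r · d(xₙ₊₁, xₙ)` for such `n`.
-/

open Filter Topology Metric Set

theorem logistic_pos_and_le_inv_succ {τ : ℕ → ℝ} (hτ1 : 0 < τ 1 ∧ τ 1 ≤ 1 / 2)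
    (hτ_rec : ∀ n, 1 ≤ n → τ (n + 1) = (1 - τ n) * τ n) :
    ∀ n, 1 ≤ n → 0 < τ n ∧ τ n ≤ 1 / (n + 1) := by
  intro n hn
  induction n, hn using Nat.le_induction with
  | base => norm_num [hτ1]
  | succ n hn ih =>
    obtain ⟨hpos, hle⟩ := ih
    have hn' : (1 : ℝ) ≤ n := by exact_mod_cast hn
    rw [le_div_iff₀ (by positivity)] at hle
    have hlt_one : τ n ≤ 1 := by nlinarith
    rw [hτ_rec n hn, le_div_iff₀ (by positivity)]
    refine ⟨mul_pos (by nlinarith) hpos, ?_⟩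
    push_cast
    -- with `t = τ n`, `N = n + 1`: `1 - (1 - t) t (N + 1) = (1 - t N)(1 - t) + t²`
    nlinarith [mul_nonneg (sub_nonneg.2 hle) (sub_nonneg.2 hlt_one), sq_nonneg (τ n)]

theorem tendsto_logistic_zero {τ : ℕ → ℝ} (hτ1 : 0 < τ 1 ∧ τ 1 ≤ 1 / 2)
    (hτ_rec : ∀ n, 1 ≤ n → τ (n + 1) = (1 - τ n) * τ n) :
    Tendsto τ atTop (𝓝 0) := by
  have hbounds := logistic_pos_and_le_inv_succ hτ1 hτ_rec
  refine tendsto_of_tendsto_of_tendsto_of_le_of_le' tendsto_const_nhds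
    tendsto_one_div_add_atTop_nhds_zero_nat ?_ ?_ <;>
  filter_upwards [eventually_ge_atTop 1] with n hn
  · exact (hbounds n hn).1.le
  · exact (hbounds n hn).2

theorem lp.dist_single_single_of_ne {α E : Type*} [DecidableEq α] [NormedAddCommGroup E]
    {i j : α} (hij : i ≠ j) (a b : E) :
    dist (lp.single (E := fun _ : α => E) ⊤ i a) (lp.single ⊤ j b) = max ‖a‖ ‖b‖ := by
  rw [dist_eq_norm]
  refine le_antisymm (lp.norm_le_of_forall_le (by positivity) fun k => ?_) (max_le ?_ ?_)
  · rcases eq_or_ne k i with rfl | hki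
    · simp [hij]
    rcases eq_or_ne k j with rfl | hkj
    · simp [hki]
    · simp [hki, hkj]
  · refine le_trans (le_of_eq ?_) (lp.norm_apply_le_norm ENNReal.top_ne_zero _ i)
    simp [hij]
  · refine le_trans (le_of_eq ?_) (lp.norm_apply_le_norm ENNReal.top_ne_zero _ j)
    simp [hij.symm]

theorem Metric.le_hausdorffDist_of_mem {α : Type*} [PseudoMetricSpace α] {s t : Set α} {a : α}
    {c : ℝ} (ha : a ∈ t) (hs : s.Nonempty) (hs_bdd : Bornology.IsBounded s)
    (ht_bdd : Bornology.IsBounded t) (hc : ∀ y ∈ s, c ≤ dist a y) :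
    c ≤ hausdorffDist s t := by
  rw [hausdorffDist_comm]
  exact ((le_infDist hs).2 hc).trans <| infDist_le_hausdorffDist_of_mem ha <|
    hausdorffEDist_ne_top_of_nonempty_of_bounded ⟨a, ha⟩ hs ht_bdd hs_bdd

theorem exists_ge_mul_one_sub_gt {τ : ℕ → ℝ} (hpos : ∀ᶠ n in atTop, 0 < τ n)
    (hlim : Tendsto τ atTop (𝓝 0)) {r : ℝ} (hr : r < 1) (k : ℕ) :
    ∃ n, k ≤ n ∧ τ n * (1 - τ n) > r * τ n := by
  obtain ⟨n, ⟨hτn_pos, hτn_small⟩, hkn⟩ :=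
    ((hpos.and (hlim.eventually (gt_mem_nhds (sub_pos.2 hr)))).and (eventually_ge_atTop k)).exists
  exact ⟨n, hkn, by nlinarith⟩

theorem lp.norm_le_hausdorffDist_image_single_Ici {E : Type*} [NormedAddCommGroup E]
    {τ : ℕ → E} (hlim : Tendsto τ atTop (𝓝 0)) (n : ℕ) :
    ‖τ n‖ ≤ hausdorffDist ((fun k => lp.single (E := fun _ : ℕ => E) ⊤ k (τ k)) '' Ici (n + 1))
      ((fun k => lp.single (E := fun _ : ℕ => E) ⊤ k (τ k)) '' Ici n) := by
  set u := fun k => lp.single (E := fun _ : ℕ => E) ⊤ k (τ k)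
  have hu_lim : Tendsto u atTop (𝓝 0) := by
    simpa [tendsto_zero_iff_norm_tendsto_zero, u] using hlim.norm
  have hu_bdd (s : Set ℕ) : Bornology.IsBounded (u '' s) :=
    (isBounded_range_of_tendsto u hu_lim).subset (image_subset_range u s)
  refine le_hausdorffDist_of_mem (mem_image_of_mem u self_mem_Ici)
    (image_nonempty.2 nonempty_Ici) (hu_bdd _) (hu_bdd _) ?_
  rintro _ ⟨m, hm, rfl⟩
  rw [lp.dist_single_single_of_ne (by simp only [mem_Ici] at hm; omega)]
  exact le_max_left _ _

/-- With `τ₁ = 1/2`, `τ_{n+1} = (1 - τₙ) τₙ`, `xₙ = τₙ eₙ` in `ℓ^∞`,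
`Xₙ = {x_k : k ≥ n}` and `T xₙ = X_{n+1}`, for every `k ≥ 1` there is no constant
`r ∈ [0,1)` with `H(T xₘ, T xₙ) ≤ r · d(xₘ, xₙ)` for all `m > n ≥ k`; equivalently, for
every `r ∈ [0,1)` and every `k ≥ 1` there exists `n ≥ k` with `τₙ (1 - τₙ) > r τₙ`. -/
theorem example_not_nadler_contraction
    (τ : ℕ → ℝ) (hτ1 : τ 1 = 1 / 2)
    (hτ_rec : ∀ n, 1 ≤ n → τ (n + 1) = (1 - τ n) * τ n)
    (e : ℕ → lp (fun _ : ℕ => ℝ) ⊤) (he : ∀ n, e n = lp.single ⊤ n (1 : ℝ))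
    (x : ℕ → lp (fun _ : ℕ => ℝ) ⊤) (hx : ∀ n, x n = τ n • e n)
    (XS : ℕ → Set (lp (fun _ : ℕ => ℝ) ⊤)) (hXS : ∀ n, XS n = {y | ∃ k, n ≤ k ∧ y = x k}) :
    (∀ k, 1 ≤ k → ¬ ∃ r : ℝ, 0 ≤ r ∧ r < 1 ∧
      ∀ m n, k ≤ n → n < m →
        Metric.hausdorffDist (XS (m + 1)) (XS (n + 1)) ≤ r * dist (x m) (x n)) ∧
    (∀ r : ℝ, 0 ≤ r → r < 1 → ∀ k, 1 ≤ k → ∃ n, k ≤ n ∧ τ n * (1 - τ n) > r * τ n) := by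
  have hτ1' : 0 < τ 1 ∧ τ 1 ≤ 1 / 2 := by norm_num [hτ1]
  have hτ_pos n (hn : 1 ≤ n) : 0 < τ n := (logistic_pos_and_le_inv_succ hτ1' hτ_rec n hn).1
  have hτ_lim : Tendsto τ atTop (𝓝 0) := tendsto_logistic_zero hτ1' hτ_rec
  have hτ_large : ∀ᶠ n in atTop, 0 < τ n := eventually_atTop.2 ⟨1, hτ_pos⟩
  have hXS_eq : XS = fun n => x '' Ici n := funext fun n => by
    rw [hXS]; ext; simp [eq_comm]
  have hx_eq : x = fun n => lp.single ⊤ n (τ n) := funext fun n => by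
    rw [hx, he, ← lp.single_smul, smul_eq_mul, mul_one]
  subst hXS_eq hx_eq
  refine ⟨fun k hk ⟨r, _, hr1, hcon⟩ => ?_,
    fun r _ hr1 k _ => exists_ge_mul_one_sub_gt hτ_large hτ_lim hr1 k⟩
  obtain ⟨n, hkn, hgt⟩ := exists_ge_mul_one_sub_gt hτ_large hτ_lim hr1 k
  have hn : 1 ≤ n := hk.trans hkn
  have hH := (lp.norm_le_hausdorffDist_image_single_Ici hτ_lim (n + 1)).trans
    (hcon (n + 1) n hkn n.lt_succ_self)
  have hτ_succ : τ (n + 1) = (1 - τ n) * τ n := hτ_rec n hn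
  rw [lp.dist_single_single_of_ne n.succ_ne_self, Real.norm_of_nonneg (hτ_pos _ (by omega)).le,
    Real.norm_of_nonneg (hτ_pos n hn).le, max_eq_right (by nlinarith [hτ_pos n hn])] at hH
  linarith
end

section
/- Let (τ_n) be the sequence defined by τ_1 = 1/2 and τ_{n+1} = (1 − τ_n) τ_n, and define α : [0,∞) → [0,1) by α(t) = 1 − τ_n if t = τ_n for some positive integer n, and α(t) = 0 otherwise. Then: (1) for every sequence (t_n) of nonnegative reals, α(t_n) → 1 implies t_n → 0; and (2) limsup_{t→0⁺} α(t) = 1, so α does not satisfy the condition limsup_{s→t⁺} α(s) < 1 at t = 0 required in Mizoguchi and Takahashi's theorem. -/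
/-!
Off the points `τₙ` the function `α` vanishes, and on them `α s = 1 - s`. Hence once `α (tₙ)`
is close to `1` we have `tₙ = 1 - α (tₙ) → 0`, while along `τₙ → 0⁺` the values `1 - τₙ` tend
to `1`. The sequence `τ` decreases to a limit `L` with `L = (1 - L) L`, so `L = 0`.
-/

open Filter Set Topology

lemma one_sub_mul_self_mem_Ioo {x : ℝ} (hx : x ∈ Ioo 0 1) : (1 - x) * x ∈ Ioo 0 1 :=
  ⟨mul_pos (by linarith [hx.2]) hx.1, by nlinarith [hx.1, hx.2]⟩

lemma tendsto_nhdsGT_zero_of_succ_eq_one_sub_mul_self {x : ℕ → ℝ} (h₀ : x 0 ∈ Ioo 0 1)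
    (hrec : ∀ n, x (n + 1) = (1 - x n) * x n) : Tendsto x atTop (𝓝[>] 0) := by
  have hmem : ∀ n, x n ∈ Ioo 0 1 := fun n => by
    induction n with
    | zero => exact h₀
    | succ n ih => rw [hrec]; exact one_sub_mul_self_mem_Ioo ih
  have hanti : Antitone x := antitone_nat_of_succ_le fun n => by
    rw [hrec]; nlinarith [(hmem n).1]
  have hlim := tendsto_atTop_ciInf hanti ⟨0, forall_mem_range.2 fun n => (hmem n).1.le⟩
  set L := ⨅ n, x n
  have hfix : L = (1 - L) * L := by
    refine tendsto_nhds_unique ((tendsto_add_atTop_iff_nat 1).2 hlim) ?_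
    simpa only [hrec] using (hlim.const_sub 1).mul hlim
  have hL : L = 0 := by nlinarith
  rw [hL] at hlim
  exact tendsto_nhdsWithin_of_tendsto_nhds_of_eventually_within _ hlim
    (Eventually.of_forall fun n => (hmem n).1)

lemma tendsto_zero_of_tendsto_comp_one {α : ℝ → ℝ} (hα : ∀ s, α s = 1 - s ∨ α s = 0)
    {t : ℕ → ℝ} (ht : Tendsto (fun n => α (t n)) atTop (𝓝 1)) : Tendsto t atTop (𝓝 0) := by
  have hev : ∀ᶠ n in atTop, 1 - α (t n) = t n := by
    filter_upwards [ht.eventually (eventually_gt_nhds one_pos)] with n hn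
    rcases hα (t n) with h | h <;> linarith
  simpa using (ht.const_sub 1).congr' hev

lemma limsup_nhdsGT_zero_eq_one {α : ℝ → ℝ} (hα : ∀ s, α s = 1 - s ∨ α s = 0)
    {x : ℕ → ℝ} (hx : Tendsto x atTop (𝓝[>] 0)) (hαx : ∀ n, α (x n) = 1 - x n) :
    limsup α (𝓝[>] 0) = 1 := by
  have hbounds : ∀ᶠ s in 𝓝[>] (0 : ℝ), 0 ≤ α s ∧ α s ≤ 1 := by
    filter_upwards [Ioo_mem_nhdsGT one_pos] with s hs
    rcases hα s with h | h <;> constructor <;> linarith [hs.1, hs.2]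
  have hbdd : IsBoundedUnder (· ≤ ·) (𝓝[>] 0) α :=
    isBoundedUnder_of_eventually_le (hbounds.mono fun _ h => h.2)
  have hαx_lim : Tendsto (α ∘ x) atTop (𝓝 1) := by
    have := (tendsto_nhds_of_tendsto_nhdsWithin hx).const_sub 1
    simpa [Function.comp_def, hαx] using this
  apply le_antisymm
  · exact limsup_le_of_le (isCoboundedUnder_le_of_eventually_le _ (hbounds.mono fun _ h => h.1))
      (hbounds.mono fun _ h => h.2)
  · calc (1 : ℝ) = limsup (α ∘ x) atTop := hαx_lim.limsup_eq.symm
      _ ≤ limsup α (𝓝[>] 0) := hx.limsup_comp_le_limsup hαx_lim.isCoboundedUnder_le hbdd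

/-- With `τ₁ = 1/2`, `τ_{n+1} = (1 - τₙ) τₙ` and `α(t) = 1 - τₙ` if `t = τₙ` for some
`n ≥ 1`, `α(t) = 0` otherwise: (1) `α` satisfies the Geraghty condition (`α tₙ → 1`
implies `tₙ → 0` for sequences of nonnegative reals); and (2) `limsup_{t → 0⁺} α t = 1`,
so `α` fails the Mizoguchi–Takahashi condition `limsup_{s → t⁺} α s < 1` at `t = 0`. -/
theorem example_alpha_geraghty_not_mizoguchi_takahashi
    (τ : ℕ → ℝ) (hτ1 : τ 1 = 1 / 2)
    (hτ_rec : ∀ n, 1 ≤ n → τ (n + 1) = (1 - τ n) * τ n)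
    (α : ℝ → ℝ)
    (hα_tau : ∀ n, 1 ≤ n → α (τ n) = 1 - τ n)
    (hα_other : ∀ t : ℝ, (∀ n, 1 ≤ n → t ≠ τ n) → α t = 0) :
    (∀ t : ℕ → ℝ, (∀ n, 0 ≤ t n) →
      Filter.Tendsto (fun n => α (t n)) Filter.atTop (nhds 1) →
      Filter.Tendsto t Filter.atTop (nhds 0)) ∧
    (Filter.limsup α (nhdsWithin 0 (Set.Ioi 0)) = 1 ∧
      ¬ Filter.limsup α (nhdsWithin 0 (Set.Ioi 0)) < 1) := by
  have hα : ∀ s, α s = 1 - s ∨ α s = 0 := fun s => by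
    by_cases h : ∃ n, 1 ≤ n ∧ s = τ n
    · obtain ⟨n, hn, rfl⟩ := h
      exact Or.inl (hα_tau n hn)
    · exact Or.inr (hα_other s fun n hn hs => h ⟨n, hn, hs⟩)
  have hτ_lim : Tendsto (fun n => τ (n + 1)) atTop (𝓝[>] 0) :=
    tendsto_nhdsGT_zero_of_succ_eq_one_sub_mul_self (by norm_num [hτ1])
      fun n => hτ_rec (n + 1) n.succ_pos
  have hlimsup := limsup_nhdsGT_zero_eq_one hα hτ_lim fun n => hα_tau (n + 1) n.succ_pos
  exact ⟨fun t _ => tendsto_zero_of_tendsto_comp_one hα, hlimsup, hlimsup.not_lt⟩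
end
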